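/- The closed linear span of the functions x ↦ x^k e^(-x²/2), k ∈ ℕ, is all of L²(ℝ). -/

import Mathlib

open MeasureTheory Real

/-! If `g ∈ L²(ℝ)` is orthogonal to every `x ^ k * exp (-x ^ 2 / 2)`, then
`h = exp (-x ^ 2 / 2) * g` has vanishing moments and finite exponential moments of every order,
so expanding `exp (i t x)` into its power series shows that the Fourier transform of `h`
vanishes. The positive and negative parts of `re h` and `im h` are densities of finite measures
with equal characteristic functions, hence equal; so `h = 0` and therefore `g = 0`. -/

open Complex Filter
open scoped ComplexConjugate InnerProductSpace

section FourierUniqueness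

variable {E : Type*} [NormedAddCommGroup E] [InnerProductSpace ℝ E] [MeasurableSpace E]
  {μ : Measure E}

lemma charFun_withDensity_ofReal {u : E → ℝ} (hu : Integrable u μ) (t : E) :
    charFun (μ.withDensity fun x ↦ ENNReal.ofReal (u x)) t =
      ∫ x, ((max (u x) 0 : ℝ) : ℂ) * cexp (⟪x, t⟫_ℝ * I) ∂μ := by
  rw [charFun_apply, integral_withDensity_eq_integral_toReal_smul₀
    hu.aemeasurable.ennreal_ofReal (Eventually.of_forall fun _ ↦ ENNReal.ofReal_lt_top)]
  simp_rw [ENNReal.toReal_ofReal', Complex.real_smul]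

variable [BorelSpace E]

lemma MeasureTheory.Integrable.mul_exp_inner_mul_I {h : E → ℂ} (hh : Integrable h μ) (t : E) :
    Integrable (fun x ↦ h x * cexp (⟪x, t⟫_ℝ * I)) μ :=
  hh.mul_bdd (by fun_prop) (Eventually.of_forall fun x ↦ (norm_exp_ofReal_mul_I _).le)

variable [SecondCountableTopology E] [CompleteSpace E]

theorem ae_eq_zero_of_forall_integral_ofReal_mul_exp_inner_eq_zero {u : E → ℝ}
    (hu : Integrable u μ) (hF : ∀ t, ∫ x, (u x : ℂ) * cexp (⟪x, t⟫_ℝ * I) ∂μ = 0) :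
    u =ᵐ[μ] 0 := by
  have := isFiniteMeasure_withDensity_ofReal hu.2
  have hu' : Integrable (fun x ↦ -u x) μ := hu.neg
  have := isFiniteMeasure_withDensity_ofReal hu'.2
  have hcharFun : charFun (μ.withDensity fun x ↦ ENNReal.ofReal (u x)) =
      charFun (μ.withDensity fun x ↦ ENNReal.ofReal (-u x)) := by
    ext t
    rw [charFun_withDensity_ofReal hu, charFun_withDensity_ofReal hu', ← sub_eq_zero,
      ← integral_sub, ← hF t]
    · congr with x
      rw [← sub_mul, ← ofReal_sub, max_zero_sub_max_neg_zero_eq_self]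
    · exact .mul_exp_inner_mul_I hu.pos_part.ofReal t
    · exact .mul_exp_inner_mul_I hu'.pos_part.ofReal t
  have hdensity := (withDensity_eq_iff hu.aemeasurable.ennreal_ofReal
    hu'.aemeasurable.ennreal_ofReal hu.lintegral_lt_top.ne).1 (Measure.ext_of_charFun hcharFun)
  filter_upwards [hdensity] with x hx
  have hmax := congrArg ENNReal.toReal hx
  simp only [ENNReal.toReal_ofReal'] at hmax
  rw [Pi.zero_apply, ← max_zero_sub_max_neg_zero_eq_self (u x), hmax, sub_self]

theorem ae_eq_zero_of_forall_integral_mul_exp_inner_eq_zero {h : E → ℂ}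
    (hh : Integrable h μ) (hF : ∀ t, ∫ x, h x * cexp (⟪x, t⟫_ℝ * I) ∂μ = 0) :
    h =ᵐ[μ] 0 := by
  have hconj : ∀ t, ∫ x, conj (h x) * cexp (⟪x, t⟫_ℝ * I) ∂μ = 0 := fun t ↦ by
    simpa [← integral_conj, ← exp_conj, inner_neg_right] using congrArg conj (hF (-t))
  have hconj_int : Integrable (fun x ↦ conj (h x)) μ := RCLike.conjLIE.integrable_comp_iff.2 hh
  have hre := ae_eq_zero_of_forall_integral_ofReal_mul_exp_inner_eq_zero
      (u := fun x ↦ (h x).re) hh.re fun t ↦ by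
    simp_rw [re_eq_add_conj, div_mul_eq_mul_div, add_mul]
    rw [integral_div, integral_add (hh.mul_exp_inner_mul_I t)
      (hconj_int.mul_exp_inner_mul_I t), hF, hconj, add_zero, zero_div]
  have him := ae_eq_zero_of_forall_integral_ofReal_mul_exp_inner_eq_zero
      (u := fun x ↦ (h x).im) hh.im fun t ↦ by
    simp_rw [im_eq_sub_conj, div_mul_eq_mul_div, sub_mul]
    rw [integral_div, integral_sub (hh.mul_exp_inner_mul_I t)
      (hconj_int.mul_exp_inner_mul_I t), hF, hconj, sub_zero, zero_div]
  filter_upwards [hre, him] with x hre him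
  exact Complex.ext hre him

end FourierUniqueness

theorem integral_mul_exp_mul_I_eq_zero_of_moments_eq_zero {h : ℝ → ℂ} {t : ℝ}
    (hh : AEStronglyMeasurable h) (hexp : Integrable (fun x : ℝ ↦ rexp |t * x| * ‖h x‖))
    (hmom : ∀ k : ℕ, ∫ x : ℝ, (x : ℂ) ^ k * h x = 0) :
    ∫ x : ℝ, h x * cexp (t * x * I) = 0 := by
  have hterm (n : ℕ) : ∫ x : ℝ, h x * ((t * x * I) ^ n / n.factorial) = 0 := by
    simp_rw [show ∀ x : ℝ, h x * ((t * x * I) ^ n / n.factorial) =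
      (t * I) ^ n / n.factorial * ((x : ℂ) ^ n * h x) from fun x ↦ by ring]
    rw [integral_const_mul, hmom, mul_zero]
  have hsum := hasSum_integral_of_dominated_convergence (μ := volume)
    (F := fun (n : ℕ) (x : ℝ) ↦ h x * ((t * x * I) ^ n / n.factorial))
    (f := fun x ↦ h x * cexp (t * x * I))
    (bound := fun (n : ℕ) (x : ℝ) ↦ |t * x| ^ n / n.factorial * ‖h x‖)
    (fun n ↦ by fun_prop)
    (fun n ↦ Eventually.of_forall fun x ↦ le_of_eq <| by
      rw [norm_mul, mul_comm, norm_div, norm_pow]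
      simp [abs_mul])
    (Eventually.of_forall fun x ↦ (Real.summable_pow_div_factorial |t * x|).mul_right ‖h x‖)
    (hexp.congr (Eventually.of_forall fun x ↦ by
      simp only [tsum_mul_right, Real.exp_eq_exp_ℝ, NormedSpace.exp_eq_tsum_div]))
    (Eventually.of_forall fun x ↦ by
      rw [exp_eq_exp_ℂ]
      exact (NormedSpace.expSeries_div_hasSum_exp (t * x * I : ℂ)).mul_left (h x))
  simp only [hterm] at hsum
  exact hsum.unique hasSum_zero

lemma memLp_two_exp_mul_abs_mul_exp_neg_sq_div_two (c : ℝ) :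
    MemLp (fun x : ℝ ↦ rexp (c * |x|) * rexp (-x ^ 2 / 2)) 2 := by
  refine (memLp_two_iff_integrable_sq_norm (by fun_prop)).2 <|
    ((integrable_exp_neg_mul_sq (b := 1 / 2) (by norm_num)).const_mul (rexp (2 * c ^ 2))).mono'
      (by fun_prop) (Eventually.of_forall fun x ↦ ?_)
  have hsq : ‖‖rexp (c * |x|) * rexp (-x ^ 2 / 2)‖ ^ 2‖ = rexp (2 * c * |x| - x ^ 2) := by
    rw [norm_of_nonneg (by positivity), Real.norm_of_nonneg (by positivity), ← Real.exp_add, sq,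
      ← Real.exp_add]
    ring_nf
  rw [hsq, ← Real.exp_add]
  exact exp_le_exp.2 (by nlinarith [sq_nonneg (c - |x| / 2), sq_abs x])

lemma memLp_two_pow_mul_exp_neg_sq_div_two (k : ℕ) :
    MemLp (fun x : ℝ ↦ (x : ℂ) ^ k * rexp (-x ^ 2 / 2)) 2 :=
  ((memLp_two_exp_mul_abs_mul_exp_neg_sq_div_two 1).const_mul k.factorial).of_le (by fun_prop)
    (Eventually.of_forall fun x ↦ by
      have hpow : |x| ^ k ≤ k.factorial * rexp |x| :=
        (div_le_iff₀' (by positivity)).1 (pow_div_factorial_le_exp _ (abs_nonneg x) k)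
      simp only [norm_mul, norm_pow, Complex.norm_real, Real.norm_eq_abs, abs_exp, one_mul,
        Nat.abs_cast, ← mul_assoc]
      gcongr)

lemma MeasureTheory.MemLp.integrable_exp_mul_abs_mul_norm_exp_neg_sq_div_two_mul {g : ℝ → ℂ}
    (hg : MemLp g 2) (c : ℝ) :
    Integrable (fun x : ℝ ↦ rexp (c * |x|) * ‖(rexp (-x ^ 2 / 2) : ℂ) * g x‖) :=
  ((memLp_two_exp_mul_abs_mul_exp_neg_sq_div_two c).integrable_mul hg.norm).congr
    (Eventually.of_forall fun x ↦ by
      simp only [Pi.mul_apply, norm_mul, Complex.norm_real,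
        Real.norm_of_nonneg (exp_pos _).le, mul_assoc])

/-- The closed linear span of the functions `x ↦ x^k e^(-x²/2)`, `k ∈ ℕ`,
is all of `L²(ℝ)` (totality of the Hermite functions). -/
theorem span_pow_mul_gaussian_dense :
    (Submodule.span ℂ
        {f : Lp ℂ 2 (volume : Measure ℝ) |
          ∃ k : ℕ, ∀ᵐ x : ℝ ∂(volume : Measure ℝ),
            f x = (x ^ k * Real.exp (-x ^ 2 / 2) : ℂ)}).topologicalClosure = ⊤ := by
  rw [Submodule.topologicalClosure_eq_top_iff, Submodule.eq_bot_iff]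
  intro g hg
  set h : ℝ → ℂ := fun x ↦ rexp (-x ^ 2 / 2) * g x
  have hmom (k : ℕ) : ∫ x : ℝ, (x : ℂ) ^ k * h x = 0 := by
    have hk := memLp_two_pow_mul_exp_neg_sq_div_two k
    have hinner := (Submodule.mem_orthogonal _ g).1 hg _
      (Submodule.subset_span ⟨k, hk.coeFn_toLp⟩)
    rw [L2.inner_def] at hinner
    rw [← hinner]
    refine integral_congr_ae ?_
    filter_upwards [hk.coeFn_toLp] with x hx
    rw [hx, RCLike.inner_apply]
    simp only [h, map_mul, map_pow, conj_ofReal]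
    ring
  have hh_meas : AEStronglyMeasurable h :=
    (by fun_prop : Continuous fun x : ℝ ↦ (rexp (-x ^ 2 / 2) : ℂ)).aestronglyMeasurable.mul
      (Lp.aestronglyMeasurable g)
  have hexp (c : ℝ) : Integrable (fun x : ℝ ↦ rexp (c * |x|) * ‖h x‖) :=
    (Lp.memLp g).integrable_exp_mul_abs_mul_norm_exp_neg_sq_div_two_mul c
  have hh : h =ᵐ[volume] 0 := ae_eq_zero_of_forall_integral_mul_exp_inner_eq_zero
    ((integrable_norm_iff hh_meas).1 (by simpa using hexp 0)) fun t ↦ by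
      simpa [mul_comm] using integral_mul_exp_mul_I_eq_zero_of_moments_eq_zero (t := t)
        hh_meas (by simpa [abs_mul] using hexp |t|) hmom
  rw [Lp.eq_zero_iff_ae_eq_zero]
  filter_upwards [hh] with x hx
  simpa [h, Real.exp_ne_zero] using hx
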